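/- Let g_1,…,g_N ∈ L be K-linearly independent and k ≤ N. The generalized Gabidulin code {(f(g_1),…,f(g_N)) : f a θ-polynomial of θ-degree < k} is an MRD code: every nonzero codeword has rank weight at least N − k + 1. -/

import Mathlib

open Polynomial

/-- Evaluation of a θ-polynomial: `P(v) = ∑ p_i θ^i(v)`. -/
noncomputable def skewEval {K L : Type*} [Field K] [Field L] [Algebra K L]
    (θ : L ≃ₐ[K] L) (p : L[X]) (v : L) : L :=
  ∑ i ∈ p.support, p.coeff i * (θ ^ i) v

/-!
The map `v ↦ f(v)` is a `K`-linear operator lying in the `L`-span of `θ⁰, …, θᵈ`, `d = deg f`.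
A nonzero such operator has kernel of `K`-dimension at most `d`: if `v ≠ 0` lies in the kernel,
right division by `θ - c` with `c = θ v / v` leaves no remainder, and since `L^θ = K` the kernel
of `θ - c` is the line `K v`; induct on `d`. Rank–nullity on the span of the `gᵢ` then bounds
`N` by the rank weight plus `d < k`.
-/

section

open Module LinearMap

theorem Submodule.finrank_comap_le {K V W : Type*} [DivisionRing K] [AddCommGroup V] [Module K V]
    [AddCommGroup W] [Module K W] [FiniteDimensional K V] (f : V →ₗ[K] W) (p : Submodule K W)
    [FiniteDimensional K p] :
    finrank K (p.comap f) ≤ finrank K p + finrank K (ker f) := by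
  have h := LinearMap.lift_rank_comap_le (f := f) p
  rw [← finrank_eq_rank, ← finrank_eq_rank, ← finrank_eq_rank] at h
  simp only [Cardinal.lift_natCast] at h
  exact_mod_cast h

theorem LinearMap.finrank_ker_comp_le {K U V W : Type*} [DivisionRing K] [AddCommGroup U]
    [Module K U] [AddCommGroup V] [Module K V] [AddCommGroup W] [Module K W]
    [FiniteDimensional K U] [FiniteDimensional K V] (f : U →ₗ[K] V) (g : V →ₗ[K] W) :
    finrank K (ker (g ∘ₗ f)) ≤ finrank K (ker g) + finrank K (ker f) := by
  rw [ker_comp]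
  exact Submodule.finrank_comap_le f (ker g)

theorem LinearIndependent.card_le_finrank_span_map_add_finrank_ker {K ι V W : Type*}
    [DivisionRing K] [AddCommGroup V] [Module K V] [AddCommGroup W] [Module K W]
    [FiniteDimensional K V] [Fintype ι] {v : ι → V} (hv : LinearIndependent K v)
    (f : V →ₗ[K] W) :
    Fintype.card ι ≤ finrank K (Submodule.span K (Set.range fun i => f (v i))) +
      finrank K (ker f) := by
  rw [Set.range_comp', ← Submodule.map_span, ← finrank_span_eq_card hv]
  exact (Submodule.finrank_mono (Submodule.le_comap_map f _)).trans
    (Submodule.finrank_comap_le f _)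

variable {K L : Type*} [Field K] [Field L] [Algebra K L]

namespace AlgEquiv

/-- `L` acts on `L →ₗ[K] L` through the codomain, so this is the space of operators
`∑_{i<n} aᵢ θⁱ` with `aᵢ ∈ L`, i.e. θ-polynomials of θ-degree `< n`. -/
noncomputable def skewDegreeLT (θ : L ≃ₐ[K] L) (n : ℕ) : Submodule L (L →ₗ[K] L) :=
  Submodule.span L ((fun i => (θ ^ i).toLinearMap) '' Set.Iio n)

variable (θ : L ≃ₐ[K] L)

theorem skewDegreeLT_mono {m n : ℕ} (h : m ≤ n) : θ.skewDegreeLT m ≤ θ.skewDegreeLT n :=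
  Submodule.span_mono (Set.image_mono (Set.Iio_subset_Iio h))

theorem skewDegreeLT_zero : θ.skewDegreeLT 0 = ⊥ := by
  simp [skewDegreeLT]

theorem pow_toLinearMap_mem_skewDegreeLT {i n : ℕ} (h : i < n) :
    (θ ^ i).toLinearMap ∈ θ.skewDegreeLT n :=
  Submodule.subset_span ⟨i, h, rfl⟩

theorem exists_pow_toLinearMap_eq_comp_sub_add (c : L) (i : ℕ) :
    ∃ Q ∈ θ.skewDegreeLT i, ∃ r : L,
      (θ ^ i).toLinearMap = Q ∘ₗ (θ.toLinearMap - c • LinearMap.id) + r • LinearMap.id := by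
  induction i with
  | zero => exact ⟨0, zero_mem _, 1, by ext; simp⟩
  | succ i ih =>
    obtain ⟨Q, hQ, r, hθi⟩ := ih
    refine ⟨(θ ^ i).toLinearMap + (θ ^ i) c • Q,
      add_mem (θ.pow_toLinearMap_mem_skewDegreeLT i.lt_succ_self)
        (Submodule.smul_mem _ _ (θ.skewDegreeLT_mono i.le_succ hQ)), (θ ^ i) c * r, ?_⟩
    -- `θ^(i+1) = θ^i ∘ (θ - c) + θ^i(c) • θ^i`
    ext x
    have hx := LinearMap.congr_fun hθi x
    simp only [LinearMap.add_apply, LinearMap.sub_apply, LinearMap.comp_apply,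
      LinearMap.smul_apply, LinearMap.id_apply, toLinearMap_apply, smul_eq_mul, pow_succ,
      mul_apply, map_sub, map_mul] at hx ⊢
    linear_combination (θ ^ i) c * hx

theorem exists_eq_comp_sub_add_of_mem_skewDegreeLT (c : L) {n : ℕ} {P : L →ₗ[K] L}
    (hP : P ∈ θ.skewDegreeLT (n + 1)) :
    ∃ Q ∈ θ.skewDegreeLT n, ∃ r : L,
      P = Q ∘ₗ (θ.toLinearMap - c • LinearMap.id) + r • LinearMap.id := by
  induction hP using Submodule.span_induction with
  | mem P hP =>
    obtain ⟨i, hi, rfl⟩ := hP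
    obtain ⟨Q, hQ, r, h⟩ := θ.exists_pow_toLinearMap_eq_comp_sub_add c i
    exact ⟨Q, θ.skewDegreeLT_mono (Nat.lt_succ_iff.mp hi) hQ, r, h⟩
  | zero => exact ⟨0, zero_mem _, 0, by simp⟩
  | add P₁ P₂ _ _ h₁ h₂ =>
    obtain ⟨Q₁, hQ₁, r₁, rfl⟩ := h₁
    obtain ⟨Q₂, hQ₂, r₂, rfl⟩ := h₂
    exact ⟨Q₁ + Q₂, add_mem hQ₁ hQ₂, r₁ + r₂, by rw [LinearMap.add_comp, add_smul]; abel⟩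
  | smul a P _ h =>
    obtain ⟨Q, hQ, r, rfl⟩ := h
    exact ⟨a • Q, Submodule.smul_mem _ a hQ, a * r,
      by rw [smul_add, LinearMap.smul_comp, mul_smul]⟩

theorem exists_eq_comp_of_mem_skewDegreeLT_of_apply_eq_zero {n : ℕ} {P : L →ₗ[K] L}
    (hP : P ∈ θ.skewDegreeLT (n + 1)) {v : L} (hv : v ≠ 0) (hPv : P v = 0) :
    ∃ Q ∈ θ.skewDegreeLT n, P = Q ∘ₗ (θ.toLinearMap - (θ v / v) • LinearMap.id) := by
  obtain ⟨Q, hQ, r, rfl⟩ := θ.exists_eq_comp_sub_add_of_mem_skewDegreeLT (θ v / v) hP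
  have hr : r = 0 := by
    simpa [div_mul_cancel₀ _ hv, hv] using hPv
  exact ⟨Q, hQ, by simp [hr]⟩

theorem ker_sub_smul_id_le_span (hfix : ∀ y : L, θ y = y → y ∈ (algebraMap K L).range)
    {v : L} (hv : v ≠ 0) :
    ker (θ.toLinearMap - (θ v / v) • LinearMap.id) ≤ K ∙ v := by
  intro w hw
  have hθw : θ w = θ v / v * w := by simpa [sub_eq_zero] using hw
  obtain ⟨a, ha⟩ := hfix (w / v) (by
    rw [map_div₀, hθw]
    field_simp [(map_ne_zero θ).mpr hv])
  exact Submodule.mem_span_singleton.mpr ⟨a, by rw [Algebra.smul_def, ha, div_mul_cancel₀ _ hv]⟩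

theorem finrank_ker_le_of_mem_skewDegreeLT [FiniteDimensional K L]
    (hfix : ∀ y : L, θ y = y → y ∈ (algebraMap K L).range) {n : ℕ} {P : L →ₗ[K] L}
    (hP : P ∈ θ.skewDegreeLT (n + 1)) (hP0 : P ≠ 0) : finrank K (ker P) ≤ n := by
  by_cases hker : ker P = ⊥
  · rw [hker, finrank_bot]
    exact n.zero_le
  obtain ⟨v, hPv, hv⟩ := (Submodule.ne_bot_iff _).mp hker
  obtain ⟨Q, hQ, rfl⟩ := θ.exists_eq_comp_of_mem_skewDegreeLT_of_apply_eq_zero hP hv hPv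
  match n, hQ with
  | 0, hQ =>
    rw [skewDegreeLT_zero, Submodule.mem_bot] at hQ
    simp [hQ] at hP0
  | n + 1, hQ =>
    have hQ0 : Q ≠ 0 := by rintro rfl; simp at hP0
    calc finrank K (ker (Q ∘ₗ (θ.toLinearMap - (θ v / v) • LinearMap.id)))
        ≤ finrank K (ker Q) + finrank K (ker (θ.toLinearMap - (θ v / v) • LinearMap.id)) :=
          finrank_ker_comp_le _ _
      _ ≤ n + finrank K (K ∙ v) :=
          add_le_add (finrank_ker_le_of_mem_skewDegreeLT hfix hQ hQ0)
            (Submodule.finrank_mono (θ.ker_sub_smul_id_le_span hfix hv))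
      _ = n + 1 := by rw [finrank_span_singleton hv]

end AlgEquiv

noncomputable def skewEvalLinearMap (θ : L ≃ₐ[K] L) (f : L[X]) : L →ₗ[K] L :=
  ∑ i ∈ f.support, f.coeff i • (θ ^ i).toLinearMap

theorem coe_skewEvalLinearMap (θ : L ≃ₐ[K] L) (f : L[X]) :
    ⇑(skewEvalLinearMap θ f) = skewEval θ f := by
  ext v
  simp [skewEvalLinearMap, skewEval]

theorem skewEvalLinearMap_mem_skewDegreeLT (θ : L ≃ₐ[K] L) (f : L[X]) :
    skewEvalLinearMap θ f ∈ θ.skewDegreeLT (f.natDegree + 1) :=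
  Submodule.sum_mem _ fun i hi => Submodule.smul_mem _ _
    (θ.pow_toLinearMap_mem_skewDegreeLT (Nat.lt_succ_of_le (le_natDegree_of_mem_supp i hi)))

end

theorem gabidulin_is_MRD_general {K L : Type*} [Field K] [Field L] [Algebra K L]
    [FiniteDimensional K L] (θ : L ≃ₐ[K] L)
    (hfix : ∀ y : L, θ y = y → y ∈ (algebraMap K L).range)
    {N k : ℕ} (hk : k ≤ N)
    (g : Fin N → L) (hg : LinearIndependent K g)
    (f : L[X]) (hdeg : f.natDegree < k)
    (hne : ∃ i, skewEval θ f (g i) ≠ 0) :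
    N - k + 1 ≤
      Module.finrank K (Submodule.span K (Set.range fun i => skewEval θ f (g i))) := by
  obtain ⟨i, hi⟩ := hne
  have hf : skewEvalLinearMap θ f ≠ 0 := fun h => hi (by rw [← coe_skewEvalLinearMap, h]; rfl)
  have hker := θ.finrank_ker_le_of_mem_skewDegreeLT hfix
    (skewEvalLinearMap_mem_skewDegreeLT θ f) hf
  have hrank := hg.card_le_finrank_span_map_add_finrank_ker (skewEvalLinearMap θ f)
  rw [Fintype.card_fin, coe_skewEvalLinearMap] at hrank
  omega

/-- The generalized Gabidulin code {(f(g₁),…,f(g_N)) : deg_θ f < k} on K-linearly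
independent evaluation points is MRD: every nonzero codeword has rank weight at least
N − k + 1. -/
theorem gabidulin_is_MRD {K L : Type*} [Field K] [Field L] [Algebra K L]
    [FiniteDimensional K L] (θ : L ≃ₐ[K] L)
    (hord : orderOf θ = Module.finrank K L)
    (hsf : Squarefree (LinearMap.charpoly θ.toLinearMap))
    (hfix : ∀ y : L, θ y = y → y ∈ (algebraMap K L).range)
    {N k : ℕ} (hN : N ≤ Module.finrank K L) (hk : k ≤ N)
    (g : Fin N → L) (hg : LinearIndependent K g)
    (f : L[X]) (hdeg : f.natDegree < k)
    (hne : ∃ i, skewEval θ f (g i) ≠ 0) :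
    N - k + 1 ≤
      Module.finrank K (Submodule.span K (Set.range fun i => skewEval θ f (g i))) :=
  gabidulin_is_MRD_general θ hfix hk g hg f hdeg hne
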